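/- arXiv:1412.3199 — 5 statements merged into one kernel-verified Lean document; each statement's English description precedes it below -/
import Mathlib

section
/- Let μ and ν be probability distributions on ℤ (with possibly countably infinite support). If μ is ASU and even about 0 and ν is ASU about a ∈ ℤ, then the convolution μ ∗ ν is ASU about a. -/
/-!
Write `(μ ∗ ν)(a + s) = ∑ⱼ μ(s - j) ν(a + j)`. Each inequality of the ASU property is
`0 ≤ ∑ⱼ d(j) ν(a + j)` where, by evenness of `μ`, the weight `d(j) = μ(s - j) - μ(t - j)` is
odd under a reflection `σ` of `ℤ` (`j ↦ -j` for the first inequality, `j ↦ 1 - j` for the second).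
Pairing `j` with `σ j` turns the sum into `½ ∑ⱼ d(j) (ν(a + j) - ν(a + σ j))`, and each term is
nonnegative: `μ` decreases in `|·|` and `ν` is ASU about `a`, so both factors change sign together.
-/

/-- Convolution of two functions on ℤ. -/
noncomputable def conv (f g : ℤ → ℝ) (e : ℤ) : ℝ := ∑' k : ℤ, f k * g (e - k)

/-- `μ` is almost symmetric unimodal (ASU) about `a`:
for every `n ∈ ℤ≥0`, `μ(a+n) ≥ μ(a-n) ≥ μ(a+n+1)`. -/
def ASU (μ : ℤ → ℝ) (a : ℤ) : Prop :=
  ∀ n : ℕ, μ (a - n) ≤ μ (a + n) ∧ μ (a + n + 1) ≤ μ (a - n)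

theorem tsum_mul_nonneg_of_antisymm {ι : Type*} (σ : Equiv.Perm ι) {d w : ι → ℝ}
    (hd : ∀ i, d (σ i) = -d i) (hdw : ∀ i, 0 ≤ d i * (w i - w (σ i))) :
    0 ≤ ∑' i, d i * w i := by
  by_cases hs : Summable fun i => d i * w i
  · have htwice : 2 * ∑' i, d i * w i = ∑' i, d i * (w i - w (σ i)) := by
      rw [two_mul]
      nth_rewrite 2 [← σ.tsum_eq]
      have hσ : Summable fun i => d (σ i) * w (σ i) := σ.summable_iff.2 hs
      rw [← hs.tsum_add hσ]
      congr 1 with i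
      rw [hd]
      ring
    have hpairs : 0 ≤ ∑' i, d i * (w i - w (σ i)) := tsum_nonneg hdw
    linarith
  · rw [tsum_eq_zero_of_not_summable hs]

theorem Summable.mul_of_abs_le {ι : Type*} {f g : ι → ℝ} {C : ℝ} (hf : Summable f)
    (hg : ∀ i, |g i| ≤ C) : Summable fun i => f i * g i :=
  (hf.abs.mul_right C).of_norm_bounded fun i => by
    rw [Real.norm_eq_abs, abs_mul]
    exact mul_le_mul_of_nonneg_left (hg i) (abs_nonneg _)

theorem conv_add_eq_tsum (f g : ℤ → ℝ) (a s : ℤ) :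
    conv f g (a + s) = ∑' j, f (s - j) * g (a + j) := by
  rw [conv, ← (Equiv.subLeft s).tsum_eq]
  congr 1 with j
  simp only [Equiv.subLeft_apply]
  ring_nf

namespace ASU

variable {μ ν : ℤ → ℝ} {a : ℤ}

theorem sub_le_add (h : ASU ν a) {j : ℤ} (hj : 0 ≤ j) : ν (a - j) ≤ ν (a + j) := by
  lift j to ℕ using hj
  exact (h j).1

theorem add_le_add_one_sub (h : ASU ν a) {j : ℤ} (hj : 1 ≤ j) : ν (a + j) ≤ ν (a + 1 - j) := by
  obtain ⟨m, rfl⟩ : ∃ m : ℕ, j = m + 1 := ⟨(j - 1).toNat, by omega⟩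
  rw [← add_assoc, show a + 1 - (m + 1) = a - m by ring]
  exact (h m).2

theorem le_center (h : ASU ν a) (e : ℤ) : ν e ≤ ν a := by
  have hright : ∀ n : ℕ, ν (a + n) ≤ ν a := by
    intro n
    induction n with
    | zero => simp
    | succ n ih =>
      rw [Nat.cast_succ, ← add_assoc]
      exact ((h n).2.trans (h n).1).trans ih
  obtain ⟨n, hn | hn⟩ := Int.eq_nat_or_neg (e - a)
  · rw [show e = a + n by omega]
    exact hright n
  · rw [show e = a - n by omega]
    exact (h n).1.trans (hright n)

theorem le_of_natAbs_le (h : ASU μ 0) (heven : ∀ e, μ e = μ (-e)) {x y : ℤ}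
    (hxy : x.natAbs ≤ y.natAbs) : μ y ≤ μ x := by
  have hanti : Antitone fun n : ℕ => μ n := antitone_nat_of_succ_le fun n => by
    have h' := (h n).2
    rwa [zero_add, zero_sub, ← heven] at h'
  have hnatAbs : ∀ z : ℤ, μ z = μ z.natAbs := fun z => by
    rw [Int.natCast_natAbs]
    rcases abs_choice z with hz | hz <;> rw [hz]
    exact heven z
  rw [hnatAbs x, hnatAbs y]
  exact hanti hxy

end ASU

section

variable {μ ν : ℤ → ℝ} {a : ℤ} {C : ℝ}

theorem conv_le_conv_of_antisymm {s t : ℤ} (hμ : Summable μ) (hν : ∀ e, |ν e| ≤ C)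
    (σ : Equiv.Perm ℤ) (hd : ∀ j, μ (s - σ j) - μ (t - σ j) = -(μ (s - j) - μ (t - j)))
    (hdw : ∀ j, 0 ≤ (μ (s - j) - μ (t - j)) * (ν (a + j) - ν (a + σ j))) :
    conv μ ν (a + t) ≤ conv μ ν (a + s) := by
  have hsum : ∀ r, Summable fun j => μ (r - j) * ν (a + j) := fun r =>
    ((Equiv.subLeft r).summable_iff.2 hμ).mul_of_abs_le fun j => hν (a + j)
  rw [← sub_nonneg, conv_add_eq_tsum, conv_add_eq_tsum, ← (hsum s).tsum_sub (hsum t)]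
  simp only [← sub_mul]
  exact tsum_mul_nonneg_of_antisymm σ hd hdw

variable (hμ : Summable μ) (hν : ∀ e, |ν e| ≤ C) (hμasu : ASU μ 0)
  (heven : ∀ e, μ e = μ (-e)) (hνasu : ASU ν a)
include hμ hν hμasu heven hνasu

theorem conv_sub_le_conv_add (n : ℕ) : conv μ ν (a - n) ≤ conv μ ν (a + n) := by
  rw [sub_eq_add_neg]
  refine conv_le_conv_of_antisymm hμ hν (Equiv.neg ℤ) (fun j => ?_) (fun j => ?_)
  · rw [Equiv.neg_apply, show (n : ℤ) - -j = -(-n - j) by ring,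
      show -(n : ℤ) - -j = -(n - j) by ring, ← heven, ← heven]
    ring
  · rw [Equiv.neg_apply, ← sub_eq_add_neg]
    rcases le_total 0 j with hj | hj
    · exact mul_nonneg (sub_nonneg.2 (hμasu.le_of_natAbs_le heven (by omega)))
        (sub_nonneg.2 (hνasu.sub_le_add hj))
    · refine mul_nonneg_of_nonpos_of_nonpos
        (sub_nonpos.2 (hμasu.le_of_natAbs_le heven (by omega))) (sub_nonpos.2 ?_)
      have h := hνasu.sub_le_add (neg_nonneg.2 hj)
      rwa [sub_neg_eq_add, ← sub_eq_add_neg] at h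

theorem conv_add_one_le_conv_sub (n : ℕ) : conv μ ν (a + n + 1) ≤ conv μ ν (a - n) := by
  rw [add_assoc, sub_eq_add_neg]
  refine conv_le_conv_of_antisymm hμ hν (Equiv.subLeft 1) (fun j => ?_) (fun j => ?_)
  · rw [Equiv.subLeft_apply, show -(n : ℤ) - (1 - j) = -(n + 1 - j) by ring,
      show (n : ℤ) + 1 - (1 - j) = -(-n - j) by ring, ← heven, ← heven]
    ring
  · rw [Equiv.subLeft_apply, ← add_sub_assoc]
    rcases le_or_gt 1 j with hj | hj
    · exact mul_nonneg_of_nonpos_of_nonpos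
        (sub_nonpos.2 (hμasu.le_of_natAbs_le heven (by omega)))
        (sub_nonpos.2 (hνasu.add_le_add_one_sub hj))
    · refine mul_nonneg (sub_nonneg.2 (hμasu.le_of_natAbs_le heven (by omega))) (sub_nonneg.2 ?_)
      have h := hνasu.add_le_add_one_sub (j := 1 - j) (by omega)
      rwa [show a + 1 - (1 - j) = a + j by ring, ← add_sub_assoc] at h

end

theorem conv_asu_general (μ ν : ℤ → ℝ) (a : ℤ)
    (hμ1 : HasSum μ 1)
    (hν0 : ∀ e, 0 ≤ ν e)
    (hμasu : ASU μ 0) (hμeven : ∀ e : ℤ, μ e = μ (-e))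
    (hνasu : ASU ν a) :
    ASU (conv μ ν) a := by
  have hνbdd : ∀ e, |ν e| ≤ ν a := fun e =>
    abs_le.2 ⟨(neg_nonpos.2 (hν0 a)).trans (hν0 e), hνasu.le_center e⟩
  exact fun n => ⟨conv_sub_le_conv_add hμ1.summable hνbdd hμasu hμeven hνasu n,
    conv_add_one_le_conv_sub hμ1.summable hνbdd hμasu hμeven hνasu n⟩

/-- if `μ` is an ASU and even probability distribution on ℤ and `ν`
is a probability distribution ASU about `a`, then `μ ∗ ν` is ASU about `a`. -/
theorem conv_asu (μ ν : ℤ → ℝ) (a : ℤ)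
    (hμ0 : ∀ e, 0 ≤ μ e) (hμ1 : HasSum μ 1)
    (hν0 : ∀ e, 0 ≤ ν e) (hν1 : HasSum ν 1)
    (hμasu : ASU μ 0) (hμeven : ∀ e : ℤ, μ e = μ (-e))
    (hνasu : ASU ν a) :
    ASU (conv μ ν) a :=
  conv_asu_general μ ν a hμ1 hν0 hμasu hμeven hνasu
end

section
/- Let μ and ν be probability distributions on ℤ with μ ⪰_r ν (reflected stochastic dominance), and let f : ℤ → ℝ be a bounded function that is even (f(n) = f(-n)) and increasing on ℤ≥0. Then ∑_{n ∈ ℤ} f(n) μ(n) ≥ ∑_{n ∈ ℤ} f(n) ν(n). -/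
open scoped ENNReal

lemma tailA (b : ℕ → ℝ≥0∞) (j : ℕ) :
    (∑' k, if j ≤ k then b k else 0) = ∑' i, b (j + i) := by
  rw [← Function.Injective.tsum_eq (g := fun i : ℕ => j + i) (add_right_injective j)
    (f := fun k => if j ≤ k then b k else 0) ?_]
  · simp [Nat.le_add_right]
  · intro x hx
    simp only [Function.mem_support, Set.mem_range] at hx ⊢
    by_contra h
    rw [if_neg] at hx
    · exact hx rfl
    · intro hle
      exact h ⟨x - j, by omega⟩

lemma layer (e b : ℕ → ℝ≥0∞) :
    ∑' k, (∑' j, if j ≤ k then e j else 0) * b k = ∑' j, e j * ∑' i, b (j + i) := by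
  calc ∑' k, (∑' j, if j ≤ k then e j else 0) * b k
      = ∑' k, ∑' j, (if j ≤ k then e j * b k else 0) := by
        refine tsum_congr fun k => ?_
        rw [← ENNReal.tsum_mul_right]
        exact tsum_congr fun j => by simp [ite_mul]
    _ = ∑' j, ∑' k, (if j ≤ k then e j * b k else 0) := ENNReal.tsum_comm
    _ = ∑' j, e j * ∑' i, b (j + i) := by
        refine tsum_congr fun j => ?_
        rw [← tailA, ← ENNReal.tsum_mul_left]
        exact tsum_congr fun k => by simp [mul_ite]

lemma int_split (h : ℤ → ℝ≥0∞) :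
    ∑' n : ℤ, h n = h 0 + ∑' k : ℕ, (h ((k : ℤ) + 1) + h (-((k : ℤ) + 1))) := by
  rw [tsum_of_nat_of_neg_add_one ENNReal.summable ENNReal.summable,
    tsum_eq_zero_add' ENNReal.summable, ENNReal.tsum_add, add_assoc]
  norm_num

/-- Reflected stochastic dominance on ℤ: for all `n > 0`,
`∑_{i ≥ n} (μ(i) + μ(-i)) ≥ ∑_{i ≥ n} (ν(i) + ν(-i))`. -/
def ReflDom (μ ν : ℤ → ℝ) : Prop :=
  ∀ n : ℕ, 0 < n →
    (∑' i : ℕ, (ν ((n : ℤ) + i) + ν (-((n : ℤ) + i)))) ≤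
      ∑' i : ℕ, (μ ((n : ℤ) + i) + μ (-((n : ℤ) + i)))

/-- if `μ ⪰_r ν` and `f : ℤ → ℝ` is bounded, even, and increasing
on ℤ≥0, then `∑_{n∈ℤ} f(n) μ(n) ≥ ∑_{n∈ℤ} f(n) ν(n)`. -/
theorem reflected_dominance_expectation
    (μ ν : ℤ → ℝ) (f : ℤ → ℝ)
    (hμ0 : ∀ n, 0 ≤ μ n) (hμ1 : HasSum μ 1)
    (hν0 : ∀ n, 0 ≤ ν n) (hν1 : HasSum ν 1)
    (hdom : ReflDom μ ν)
    (hbdd : ∃ C : ℝ, ∀ n, |f n| ≤ C)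
    (heven : ∀ n : ℤ, f n = f (-n))
    (hmono : ∀ n : ℕ, f (n : ℤ) ≤ f ((n : ℤ) + 1)) :
    (∑' n : ℤ, f n * ν n) ≤ ∑' n : ℤ, f n * μ n := by
  obtain ⟨C, hC⟩ := hbdd
  have hμs := hμ1.summable
  have hνs := hν1.summable
  -- monotonicity on ℕ
  have hFmono : Monotone (fun k : ℕ => f (k : ℤ)) := by
    refine monotone_nat_of_le_succ fun n => ?_
    have := hmono n
    push_cast
    exact this
  have habs : ∀ n : ℤ, f n = f (n.natAbs : ℤ) := by
    intro n
    rcases Int.natAbs_eq n with h | h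
    · rw [← h]
    · rw [heven n]; congr 1; omega
  have hf0 : ∀ n : ℤ, f 0 ≤ f n := by
    intro n
    rw [habs n]
    have := hFmono (Nat.zero_le n.natAbs)
    simpa using this
  set g : ℤ → ℝ := fun n => f n - f 0 with hgdef
  have hg0 : ∀ n, 0 ≤ g n := fun n => sub_nonneg.2 (hf0 n)
  have hgle : ∀ n, g n ≤ C + C := by
    intro n
    have h1 := abs_le.1 (hC n)
    have h2 := abs_le.1 (hC 0)
    simp only [hgdef]
    linarith [h1.2, h2.2, h2.1]
  have hgeven : ∀ n : ℤ, g (-n) = g n := by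
    intro n; simp only [hgdef, ← heven n]
  -- summabilities
  have hgμ : Summable (fun n => g n * μ n) :=
    Summable.of_nonneg_of_le (fun n => mul_nonneg (hg0 n) (hμ0 n))
      (fun n => mul_le_mul_of_nonneg_right (hgle n) (hμ0 n)) (hμs.mul_left (C + C))
  have hgν : Summable (fun n => g n * ν n) :=
    Summable.of_nonneg_of_le (fun n => mul_nonneg (hg0 n) (hν0 n))
      (fun n => mul_le_mul_of_nonneg_right (hgle n) (hν0 n)) (hνs.mul_left (C + C))
  have hdecomp : ∀ (ρ : ℤ → ℝ), HasSum ρ 1 → Summable (fun n => g n * ρ n) →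
      ∑' n : ℤ, f n * ρ n = (∑' n : ℤ, g n * ρ n) + f 0 := by
    intro ρ hρ1 hgρ
    have heq : (fun n : ℤ => f n * ρ n) = fun n => g n * ρ n + f 0 * ρ n := by
      funext n; simp only [hgdef]; ring
    rw [heq, Summable.tsum_add hgρ (hρ1.summable.mul_left (f 0)), tsum_mul_left, hρ1.tsum_eq, mul_one]
  rw [hdecomp μ hμ1 hgμ, hdecomp ν hν1 hgν, add_le_add_iff_right]
  -- move to ℝ≥0∞
  refine (ENNReal.ofReal_le_ofReal_iff
    (tsum_nonneg fun n => mul_nonneg (hg0 n) (hμ0 n))).mp ?_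
  rw [ENNReal.ofReal_tsum_of_nonneg (fun n => mul_nonneg (hg0 n) (hν0 n)) hgν,
    ENNReal.ofReal_tsum_of_nonneg (fun n => mul_nonneg (hg0 n) (hμ0 n)) hgμ]
  set e : ℕ → ℝ≥0∞ := fun j => ENNReal.ofReal (f ((j : ℤ) + 1) - f (j : ℤ)) with hedef
  -- the main identity for a probability mass ρ
  have main : ∀ (ρ : ℤ → ℝ), (∀ n, 0 ≤ ρ n) →
      ∑' n : ℤ, ENNReal.ofReal (g n * ρ n) =
        ∑' j : ℕ, e j * ∑' i : ℕ,
          ENNReal.ofReal (ρ ((↑(j + i) : ℤ) + 1) + ρ (-((↑(j + i) : ℤ) + 1))) := by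
    intro ρ hρ0
    rw [int_split]
    have h0 : ENNReal.ofReal (g 0 * ρ 0) = 0 := by simp [hgdef]
    rw [h0, zero_add]
    rw [show (∑' k : ℕ, (ENNReal.ofReal (g ((k : ℤ) + 1) * ρ ((k : ℤ) + 1)) +
        ENNReal.ofReal (g (-((k : ℤ) + 1)) * ρ (-((k : ℤ) + 1))))) =
        ∑' k : ℕ, (∑' j, if j ≤ k then e j else 0) *
          ENNReal.ofReal (ρ ((k : ℤ) + 1) + ρ (-((k : ℤ) + 1))) from ?_]
    · rw [layer]
    · refine tsum_congr fun k => ?_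
      have hGk : (∑' j, if j ≤ k then e j else 0) = ENNReal.ofReal (g ((k : ℤ) + 1)) := by
        have htsum : (∑' j, if j ≤ k then e j else 0) =
            ∑ j ∈ Finset.range (k + 1), (if j ≤ k then e j else 0) := by
          refine tsum_eq_sum ?_
          intro j hj
          simp only [Finset.mem_range] at hj
          rw [if_neg]; omega
        rw [htsum, Finset.sum_congr rfl (fun j hj => if_pos (by
          simp only [Finset.mem_range] at hj; omega))]
        have htel := Finset.sum_range_sub (f := fun j : ℕ => f (j : ℤ)) (k + 1)
        have hgk : g ((k : ℤ) + 1) = ∑ j ∈ Finset.range (k + 1),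
            (f ((j : ℤ) + 1) - f (j : ℤ)) := by
          simp only [hgdef]
          rw [show (∑ j ∈ Finset.range (k + 1), (f ((j : ℤ) + 1) - f (j : ℤ)))
            = ∑ j ∈ Finset.range (k + 1),
              ((fun j : ℕ => f (j : ℤ)) (j + 1) - (fun j : ℕ => f (j : ℤ)) j) from ?_, htel]
          · push_cast; ring_nf
          · refine Finset.sum_congr rfl fun j _ => ?_
            push_cast; ring_nf
        rw [hgk, ENNReal.ofReal_sum_of_nonneg]
        intro j _
        have := hmono j
        linarith
      rw [hGk, hgeven ((k : ℤ) + 1), ← ENNReal.ofReal_mul (hg0 _), mul_add,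
        ENNReal.ofReal_add (mul_nonneg (hg0 _) (hρ0 _)) (mul_nonneg (hg0 _) (hρ0 _))]
  rw [main μ hμ0, main ν hν0]
  refine ENNReal.tsum_le_tsum fun j => ?_
  refine mul_le_mul_right ?_ (e j)
  -- tail comparison
  have htail : ∀ (ρ : ℤ → ℝ), (∀ n, 0 ≤ ρ n) → Summable ρ →
      (∑' i : ℕ, ENNReal.ofReal (ρ ((↑(j + i) : ℤ) + 1) + ρ (-((↑(j + i) : ℤ) + 1)))) =
      ENNReal.ofReal (∑' i : ℕ,
        (ρ ((↑(j + 1) : ℤ) + i) + ρ (-((↑(j + 1) : ℤ) + i)))) := by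
    intro ρ hρ0 hρs
    have hinj1 : Function.Injective (fun i : ℕ => ((↑(j + 1) : ℤ) + i)) := by
      intro a b h
      simp only [add_right_inj, Nat.cast_inj] at h
      exact h
    have hinj2 : Function.Injective (fun i : ℕ => -((↑(j + 1) : ℤ) + i)) := by
      intro a b h
      simp only [neg_inj, add_right_inj, Nat.cast_inj] at h
      exact h
    have hsum_tail : Summable (fun i : ℕ =>
        (ρ ((↑(j + 1) : ℤ) + i) + ρ (-((↑(j + 1) : ℤ) + i)))) :=
      (hρs.comp_injective hinj1).add (hρs.comp_injective hinj2)
    rw [ENNReal.ofReal_tsum_of_nonneg (fun i => add_nonneg (hρ0 _) (hρ0 _)) hsum_tail]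
    refine tsum_congr fun i => ?_
    congr 2 <;> push_cast <;> ring_nf
  rw [htail μ hμ0 hμs, htail ν hν0 hνs]
  exact ENNReal.ofReal_le_ofReal (hdom (j + 1) (Nat.succ_pos j))
end

section
/- Finite-horizon value functions defined by the dynamic program V_{T+1}(e) = 0 and V_t(e) = min{ λ + ∑_n P(0,n) V_{t+1}(n), d(e) + ∑_n P(e,n) V_{t+1}(n) } are even and increasing on ℤ≥0 for every t, provided: P(i,j) = p(|i-j|) with (p(n))_{n≥0} decreasing nonnegative, d : ℤ → ℝ≥0 is even and increasing on ℤ≥0 and bounded, and λ ≥ 0. -/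
set_option maxHeartbeats 1000000


/-- the finite-horizon value functions defined by the dynamic
program `V_{T+1} = 0` and
`V_t(e) = min{ λ + ∑ₙ P(0,n) V_{t+1}(n), d(e) + ∑ₙ P(e,n) V_{t+1}(n) }`
are even and increasing on ℤ≥0.  Here we index value functions by the number of
remaining stages: `V 0 = 0` and `V (s+1)` is obtained from `V s` by one step of
the dynamic programming recursion. -/
theorem value_functions_even_increasing
    (p : ℕ → ℝ) (d : ℤ → ℝ) (lam : ℝ)
    (hp0 : ∀ n, 0 ≤ p n)
    (hpdec : ∀ n : ℕ, p (n + 1) ≤ p n)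
    (hrow : ∀ i : ℤ, HasSum (fun j : ℤ => p (i - j).natAbs) 1)
    (hd0 : ∀ e, 0 ≤ d e)
    (hdeven : ∀ e : ℤ, d e = d (-e))
    (hdinc : ∀ e : ℕ, d (e : ℤ) ≤ d ((e : ℤ) + 1))
    (hdbdd : ∃ C : ℝ, ∀ e, d e ≤ C)
    (hlam : 0 ≤ lam)
    (V : ℕ → ℤ → ℝ)
    (hV0 : ∀ e : ℤ, V 0 e = 0)
    (hVrec : ∀ (s : ℕ) (e : ℤ),
      V (s + 1) e =
        min (lam + ∑' n : ℤ, p ((0 : ℤ) - n).natAbs * V s n)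
            (d e + ∑' n : ℤ, p (e - n).natAbs * V s n)) :
    ∀ s : ℕ, (∀ e : ℤ, V s e = V s (-e)) ∧
      ∀ e : ℕ, V s (e : ℤ) ≤ V s ((e : ℤ) + 1) := by
  have hpanti : Antitone p := antitone_nat_of_succ_le hpdec
  have main : ∀ s : ℕ, (∀ e : ℤ, V s e = V s (-e)) ∧
      (∀ e : ℕ, V s (e : ℤ) ≤ V s ((e : ℤ) + 1)) ∧
      (∀ e : ℤ, 0 ≤ V s e) ∧ (∀ e : ℤ, V s e ≤ s * lam) := by
    intro s
    induction s with
    | zero =>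
      exact ⟨fun e => by simp [hV0], fun e => by simp [hV0],
        fun e => by simp [hV0], fun e => by simp [hV0]⟩
    | succ s ih =>
      obtain ⟨heven, hinc, hpos, hbd⟩ := ih
      have hmonoNat : Monotone (fun k : ℕ => V s (k : ℤ)) := by
        apply monotone_nat_of_le_succ
        intro k
        have := hinc k
        push_cast
        exact this
      have habs : ∀ a : ℤ, V s a = V s (a.natAbs : ℤ) := by
        intro a
        rcases Int.natAbs_eq a with h | h
        · rw [← h]
        · rw [heven a, h, neg_neg]; simp
      have hmono : ∀ a b : ℤ, a.natAbs ≤ b.natAbs → V s a ≤ V s b := by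
        intro a b h
        rw [habs a, habs b]
        exact hmonoNat h
      have hsp : ∀ e : ℤ, Summable (fun n : ℤ => p (e - n).natAbs) :=
        fun e => (hrow e).summable
      have hs : ∀ e : ℤ, Summable (fun n : ℤ => p (e - n).natAbs * V s n) := by
        intro e
        apply Summable.of_nonneg_of_le (fun n => mul_nonneg (hp0 _) (hpos _))
          (fun n => mul_le_mul_of_nonneg_left (hbd n) (hp0 _))
        exact (hsp e).mul_right (s * lam)
      have hWsymm : ∀ e : ℤ,
          (∑' n : ℤ, p (-e - n).natAbs * V s n) = ∑' n : ℤ, p (e - n).natAbs * V s n := by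
        intro e
        rw [← (Equiv.neg ℤ).tsum_eq (fun n : ℤ => p (-e - n).natAbs * V s n)]
        apply tsum_congr
        intro n
        simp only [Equiv.neg_apply]
        have h1 : (-e - -n).natAbs = (e - n).natAbs := by omega
        rw [h1, ← heven]
      have hWmono : ∀ e : ℤ, 0 ≤ e →
          (∑' n : ℤ, p (e - n).natAbs * V s n) ≤ ∑' n : ℤ, p (e + 1 - n).natAbs * V s n := by
        intro e he
        set g : ℤ → ℝ := fun n =>
          p (e + 1 - n).natAbs * V s n - p (e - n).natAbs * V s n with hg
        have hgsum : Summable g := (hs (e + 1)).sub (hs e)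
        have hσeq : ∑' n : ℤ, g ((2 * e + 1) - n) = ∑' n, g n :=
          (Equiv.subLeft (2 * e + 1)).tsum_eq g
        have hσsum : Summable (fun n : ℤ => g ((2 * e + 1) - n)) :=
          (Equiv.subLeft (2 * e + 1)).summable_iff.mpr hgsum
        have hpt : ∀ n : ℤ, 0 ≤ g n + g ((2 * e + 1) - n) := by
          intro n
          have ha : g n + g ((2 * e + 1) - n)
              = (p (e + 1 - n).natAbs - p (e - n).natAbs) *
                (V s n - V s ((2 * e + 1) - n)) := by
            have h1 : (e + 1 - ((2 * e + 1) - n)).natAbs = (e - n).natAbs := by omega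
            have h2 : (e - ((2 * e + 1) - n)).natAbs = (e + 1 - n).natAbs := by omega
            simp only [hg, h1, h2]
            ring
          rw [ha]
          rcases le_or_gt (e + 1) n with hn | hn
          · apply mul_nonneg
            · have : (e + 1 - n).natAbs ≤ (e - n).natAbs := by omega
              linarith [hpanti this]
            · have : ((2 * e + 1) - n).natAbs ≤ n.natAbs := by omega
              linarith [hmono _ _ this]
          · have hc1 : (e - n).natAbs ≤ (e + 1 - n).natAbs := by omega
            have hc2 : n.natAbs ≤ ((2 * e + 1) - n).natAbs := by omega
            nlinarith [hpanti hc1, hmono _ _ hc2]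
        have hsum2 : 0 ≤ ∑' n : ℤ, (g n + g ((2 * e + 1) - n)) := tsum_nonneg hpt
        rw [Summable.tsum_add hgsum hσsum, hσeq] at hsum2
        have hg0 : 0 ≤ ∑' n, g n := by linarith
        have := Summable.tsum_sub (hs (e + 1)) (hs e)
        simp only [← hg] at this
        have heq : (fun n : ℤ => p ((e + 1) - n).natAbs * V s n)
            = fun n : ℤ => p (e + 1 - n).natAbs * V s n := by
          funext n; norm_num
        linarith [this ▸ hg0]
      refine ⟨?_, ?_, ?_, ?_⟩
      · intro e
        rw [hVrec, hVrec, hWsymm e, hdeven e]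
      · intro e
        rw [hVrec, hVrec]
        apply min_le_min le_rfl
        have h1 := hWmono (e : ℤ) (by positivity)
        have h2 := hdinc e
        exact add_le_add h2 h1
      · intro e
        rw [hVrec]
        have h1 : 0 ≤ ∑' n : ℤ, p ((0 : ℤ) - n).natAbs * V s n :=
          tsum_nonneg (fun n => mul_nonneg (hp0 _) (hpos _))
        have h2 : 0 ≤ ∑' n : ℤ, p (e - n).natAbs * V s n :=
          tsum_nonneg (fun n => mul_nonneg (hp0 _) (hpos _))
        exact le_min (by linarith) (by linarith [hd0 e])
      · intro e
        rw [hVrec]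
        have hb : (∑' n : ℤ, p ((0 : ℤ) - n).natAbs * V s n) ≤ s * lam := by
          calc (∑' n : ℤ, p ((0 : ℤ) - n).natAbs * V s n)
              ≤ ∑' n : ℤ, p ((0 : ℤ) - n).natAbs * (s * lam) :=
                Summable.tsum_le_tsum (fun n => mul_le_mul_of_nonneg_left (hbd n) (hp0 _))
                  (hs 0) ((hsp 0).mul_right _)
            _ = (∑' n : ℤ, p ((0 : ℤ) - n).natAbs) * (s * lam) := tsum_mul_right
            _ = s * lam := by rw [(hrow 0).tsum_eq]; ring
        refine (min_le_left _ _).trans ?_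
        push_cast
        linarith
  exact fun s => ⟨(main s).1, (main s).2.1⟩
end

section
/- With P^(k) and β as above, define L^(k)_β = ⟨ [(I - βP^(k))^{-1}]_0 , d^(k) ⟩ and M^(k)_β = ⟨ [(I - βP^(k))^{-1}]_0 , 𝟏 ⟩, where d^(k) = (d(-k+1), ..., d(k-1)) with d even, increasing on ℤ≥0, d(0) = 0 and d(e) > 0 for e ≠ 0, and [·]_0 denotes row 0. Then L^(k)_β < L^(k+1)_β and M^(k)_β < M^(k+1)_β for all k ∈ ℤ>0. -/
/-!
Since the rows of `βP^(k)` sum to at most `β < 1`, the resolvent `(I - βP^(k))⁻¹` is the Neumann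
series `∑ β^t (P^(k))^t`, all of whose terms are entrywise nonnegative. `P^(k)` is the principal
submatrix of `P^(k+1)` on `S^(k) ⊆ S^(k+1)`, so `(P^(k))^t ≤ (P^(k+1))^t` entrywise, and every
term of `L^(k)_β` is dominated by the corresponding term of `L^(k+1)_β`. Strictness comes from the
new site `k ∈ S^(k+1) \ S^(k)`: it is reached from `0` in `k` unit steps, so its resolvent entry is
at least `(β p(1))^k > 0`, while its weight `d(k)` is positive. `M^(k)_β` is the case `d ≡ 1`.
-/

/-- Restriction of the Toeplitz matrix `P(i,j) = p(|i-j|)` to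
`S^(k) = {-(k-1), …, k-1}`, indexed by `Fin (2k-1)` (index `i` corresponds to
the integer `i - (k-1)`). -/
def Prestrict (p : ℕ → ℝ) (k : ℕ) : Matrix (Fin (2 * k - 1)) (Fin (2 * k - 1)) ℝ :=
  fun i j => p ((i.val : ℤ) - (j.val : ℤ)).natAbs

/-- The inner product `L^(k)_β = ⟨[(I - βP^(k))⁻¹]₀, d^(k)⟩`, where row 0 of the
`S^(k)`-indexed matrix is the row at `Fin` index `k-1`. -/
noncomputable def Lkβ (p : ℕ → ℝ) (d : ℤ → ℝ) (β : ℝ) (k : ℕ) (hk : 1 ≤ k) : ℝ :=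
  ∑ j : Fin (2 * k - 1),
    (1 - β • Prestrict p k)⁻¹ ⟨k - 1, by omega⟩ j * d ((j.val : ℤ) - ((k : ℤ) - 1))

/-- `M^(k)_β = ⟨[(I - βP^(k))⁻¹]₀, 𝟏⟩`. -/
noncomputable def Mkβ (p : ℕ → ℝ) (β : ℝ) (k : ℕ) (hk : 1 ≤ k) : ℝ :=
  ∑ j : Fin (2 * k - 1), (1 - β • Prestrict p k)⁻¹ ⟨k - 1, by omega⟩ j

namespace Matrix

variable {n m R : Type*} [Fintype n] [Fintype m] [DecidableEq n] [DecidableEq m]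

section OrderedSemiring

variable [Semiring R] [PartialOrder R] [IsOrderedRing R] {B : Matrix m m R}

theorem pow_apply_mul_apply_le_pow_succ_apply (hB : ∀ i j, 0 ≤ B i j) (t : ℕ) (i l j : m) :
    (B ^ t) i l * B l j ≤ (B ^ (t + 1)) i j := by
  rw [pow_succ, mul_apply]
  exact Finset.single_le_sum (fun c _ => mul_nonneg (pow_apply_nonneg hB t i c) (hB c j))
    (Finset.mem_univ l)

theorem submatrix_pow_apply_le (hB : ∀ i j, 0 ≤ B i j) (e : n ↪ m) (t : ℕ) (i j : n) :
    (B.submatrix e e ^ t) i j ≤ (B ^ t) (e i) (e j) := by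
  induction t generalizing i with
  | zero => simp [one_apply, e.injective.eq_iff]
  | succ t ih =>
    rw [pow_succ', pow_succ', mul_apply, mul_apply]
    calc ∑ l, B (e i) (e l) * (B.submatrix e e ^ t) l j
        ≤ ∑ l, B (e i) (e l) * (B ^ t) (e l) (e j) :=
          Finset.sum_le_sum fun l _ => mul_le_mul_of_nonneg_left (ih l) (hB _ _)
      _ = ∑ l ∈ Finset.univ.map e, B (e i) l * (B ^ t) l (e j) := by rw [Finset.sum_map]
      _ ≤ ∑ l, B (e i) l * (B ^ t) l (e j) :=
          Finset.sum_le_sum_of_subset_of_nonneg (Finset.subset_univ _) fun l _ _ =>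
            mul_nonneg (hB _ _) (pow_apply_nonneg hB t _ _)

end OrderedSemiring

section Neumann

attribute [local instance] Matrix.linftyOpNormedAddCommGroup Matrix.linftyOpNormedRing
  Matrix.linftyOpNormedSpace

theorem hasSum_pow_apply_inv_one_sub {A : Matrix n n ℝ} (hA : ∀ i, ∑ j, |A i j| < 1)
    (i j : n) : HasSum (fun t => (A ^ t) i j) ((1 - A)⁻¹ i j) := by
  have hnorm : ‖A‖ < 1 := by
    rw [linfty_opNorm_def, ← NNReal.coe_one, NNReal.coe_lt_coe, Finset.sup_lt_iff zero_lt_one]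
    intro i _
    rw [← NNReal.coe_lt_coe]
    simpa [Real.norm_eq_abs] using hA i
  rw [inv_eq_right_inv (mul_neg_geom_series A hnorm)]
  exact Pi.hasSum.1 (Pi.hasSum.1 (summable_geometric_of_norm_lt_one hnorm).hasSum i) j

end Neumann

section Substochastic

variable {B : Matrix m m ℝ}

theorem hasSum_pow_apply_inv_one_sub_of_nonneg (hB0 : ∀ i j, 0 ≤ B i j)
    (hB : ∀ i, ∑ j, B i j < 1) (i j : m) : HasSum (fun t => (B ^ t) i j) ((1 - B)⁻¹ i j) :=
  hasSum_pow_apply_inv_one_sub (fun i => by simpa only [abs_of_nonneg (hB0 i _)] using hB i) i j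

theorem pow_apply_le_inv_one_sub_apply (hB0 : ∀ i j, 0 ≤ B i j) (hB : ∀ i, ∑ j, B i j < 1)
    (t : ℕ) (i j : m) : (B ^ t) i j ≤ (1 - B)⁻¹ i j :=
  le_hasSum (hasSum_pow_apply_inv_one_sub_of_nonneg hB0 hB i j) t
    fun s _ => pow_apply_nonneg hB0 s i j

theorem inv_one_sub_apply_nonneg (hB0 : ∀ i j, 0 ≤ B i j) (hB : ∀ i, ∑ j, B i j < 1)
    (i j : m) : 0 ≤ (1 - B)⁻¹ i j :=
  (hasSum_pow_apply_inv_one_sub_of_nonneg hB0 hB i j).nonneg fun t => pow_apply_nonneg hB0 t i j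

theorem inv_one_sub_submatrix_apply_le (hB0 : ∀ i j, 0 ≤ B i j) (hB : ∀ i, ∑ j, B i j < 1)
    (e : n ↪ m) (i j : n) : (1 - B.submatrix e e)⁻¹ i j ≤ (1 - B)⁻¹ (e i) (e j) := by
  have hrow (i : n) : ∑ j, B.submatrix e e i j < 1 := by
    refine lt_of_le_of_lt ?_ (hB (e i))
    change ∑ j, B (e i) (e j) ≤ _
    rw [← Finset.sum_map Finset.univ e]
    exact Finset.sum_le_sum_of_subset_of_nonneg (Finset.subset_univ _) fun l _ _ => hB0 _ _
  exact hasSum_le (fun t => submatrix_pow_apply_le hB0 e t i j)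
    (hasSum_pow_apply_inv_one_sub_of_nonneg (fun _ _ => hB0 _ _) hrow i j)
    (hasSum_pow_apply_inv_one_sub_of_nonneg hB0 hB (e i) (e j))

end Substochastic

end Matrix

section Toeplitz

variable {p : ℕ → ℝ} {β : ℝ}

theorem sum_Prestrict_le_one (hp0 : ∀ n, 0 ≤ p n)
    (hrow : ∀ i : ℤ, HasSum (fun j : ℤ => p (i - j).natAbs) 1) (k : ℕ) (i : Fin (2 * k - 1)) :
    ∑ j, Prestrict p k i j ≤ 1 := by
  let toInt : Fin (2 * k - 1) ↪ ℤ := ⟨fun j => j.val, fun _ _ h => Fin.ext (Int.ofNat_inj.mp h)⟩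
  calc ∑ j, Prestrict p k i j = ∑ z ∈ Finset.univ.map toInt, p ((i : ℤ) - z).natAbs := by
        rw [Finset.sum_map]; rfl
    _ ≤ 1 := sum_le_hasSum _ (fun _ _ => hp0 _) (hrow i)

theorem sum_smul_Prestrict_lt_one (hp0 : ∀ n, 0 ≤ p n)
    (hrow : ∀ i : ℤ, HasSum (fun j : ℤ => p (i - j).natAbs) 1) (hβ : β ∈ Set.Ioo (0 : ℝ) 1)
    (k : ℕ) (i : Fin (2 * k - 1)) : ∑ j, (β • Prestrict p k) i j < 1 := by
  simp only [Matrix.smul_apply, smul_eq_mul, ← Finset.mul_sum]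
  calc β * ∑ j, Prestrict p k i j ≤ β * 1 :=
        mul_le_mul_of_nonneg_left (sum_Prestrict_le_one hp0 hrow k i) hβ.1.le
    _ < 1 := by rw [mul_one]; exact hβ.2

/-- In integer coordinates this is the inclusion `S^(k) ⊆ S^(k+1)`. -/
@[simps]
def Prestrict.succEmb (k : ℕ) : Fin (2 * k - 1) ↪ Fin (2 * (k + 1) - 1) :=
  ⟨fun j => ⟨j + 1, by omega⟩, fun _ _ h => Fin.ext (by simpa using congrArg Fin.val h)⟩

theorem Prestrict.succEmb_ne_last (k : ℕ) (j : Fin (2 * k - 1)) :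
    Prestrict.succEmb k j ≠ ⟨k + k, by omega⟩ := by
  rw [Ne, Fin.ext_iff, Prestrict.succEmb_apply_val]
  dsimp only
  omega

theorem Prestrict_succ_submatrix (k : ℕ) :
    (Prestrict p (k + 1)).submatrix (Prestrict.succEmb k) (Prestrict.succEmb k) =
      Prestrict p k := by
  ext i j
  simp [Prestrict]

theorem pow_le_pow_smul_Prestrict_apply (hp0 : ∀ n, 0 ≤ p n) (hβ0 : 0 ≤ β) (k t : ℕ)
    (ht : t ≤ k) :
    (β * p 1) ^ t ≤ ((β • Prestrict p (k + 1)) ^ t) ⟨k, by omega⟩ ⟨k + t, by omega⟩ := by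
  induction t with
  | zero => simp
  | succ t ih =>
    have hstep :
        (β • Prestrict p (k + 1)) ⟨k + t, by omega⟩ ⟨k + (t + 1), by omega⟩ = β * p 1 := by
      simp only [Matrix.smul_apply, smul_eq_mul, Prestrict]
      congr 3
      omega
    calc (β * p 1) ^ (t + 1) = (β * p 1) ^ t * (β * p 1) := pow_succ _ _
      _ ≤ ((β • Prestrict p (k + 1)) ^ t) ⟨k, by omega⟩ ⟨k + t, by omega⟩ *
            (β • Prestrict p (k + 1)) ⟨k + t, by omega⟩ ⟨k + (t + 1), by omega⟩ := by
          rw [hstep]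
          exact mul_le_mul_of_nonneg_right (ih (by omega)) (mul_nonneg hβ0 (hp0 1))
      _ ≤ _ := Matrix.pow_apply_mul_apply_le_pow_succ_apply
          (fun _ _ => mul_nonneg hβ0 (hp0 _)) t _ _ _

theorem Lkβ_lt_Lkβ_succ {w : ℤ → ℝ} {k : ℕ} (hk : 1 ≤ k)
    (hp0 : ∀ n, 0 ≤ p n) (hp1 : 0 < p 1)
    (hrow : ∀ i : ℤ, HasSum (fun j : ℤ => p (i - j).natAbs) 1) (hβ : β ∈ Set.Ioo (0 : ℝ) 1)
    (hw0 : ∀ e, 0 ≤ w e) (hwk : 0 < w k) :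
    Lkβ p w β k hk < Lkβ p w β (k + 1) (Nat.le_add_left 1 k) := by
  set B := β • Prestrict p (k + 1)
  set e := Prestrict.succEmb k
  have hB0 (i j) : 0 ≤ B i j := mul_nonneg hβ.1.le (hp0 _)
  have hB (i) : ∑ j, B i j < 1 := sum_smul_Prestrict_lt_one hp0 hrow hβ (k + 1) i
  have hsub : β • Prestrict p k = B.submatrix e e := by
    rw [← Prestrict_succ_submatrix]
    rfl
  have hcentre : e ⟨k - 1, by omega⟩ = ⟨k + 1 - 1, by omega⟩ := Fin.ext (by simp [e]; omega)
  -- the endpoint `k` of `S^(k+1)`, reached from `0` in `k` unit steps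
  let j₀ : Fin (2 * (k + 1) - 1) := ⟨k + k, by omega⟩
  have hj₀ : j₀ ∉ Finset.univ.map e :=
    Finset.mem_map.not.mpr fun ⟨j, _, hj⟩ => Prestrict.succEmb_ne_last k j hj
  have hpos : 0 < (1 - B)⁻¹ ⟨k + 1 - 1, by omega⟩ j₀ * w ((j₀ : ℤ) - ((k + 1 : ℕ) - 1)) := by
    have hpath := pow_le_pow_smul_Prestrict_apply hp0 hβ.1.le k k le_rfl
    refine mul_pos (lt_of_lt_of_le (pow_pos (mul_pos hβ.1 hp1) k) ?_) ?_
    · exact hpath.trans (Matrix.pow_apply_le_inv_one_sub_apply hB0 hB k _ _)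
    · simpa [j₀] using hwk
  unfold Lkβ
  calc ∑ j, (1 - β • Prestrict p k)⁻¹ ⟨k - 1, by omega⟩ j * w ((j : ℤ) - ((k : ℤ) - 1))
      ≤ ∑ j, (1 - B)⁻¹ ⟨k + 1 - 1, by omega⟩ (e j) * w ((e j : ℤ) - ((k + 1 : ℕ) - 1)) := by
        refine Finset.sum_le_sum fun j _ => ?_
        rw [hsub, ← hcentre]
        refine mul_le_mul (Matrix.inv_one_sub_submatrix_apply_le hB0 hB e _ _) (le_of_eq ?_)
          (hw0 _) (Matrix.inv_one_sub_apply_nonneg hB0 hB _ _)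
        congr 1
        simp only [e, Prestrict.succEmb_apply_val, Nat.cast_add, Nat.cast_one,
          add_sub_cancel_right]
        ring
    _ = ∑ j ∈ Finset.univ.map e,
          (1 - B)⁻¹ ⟨k + 1 - 1, by omega⟩ j * w ((j : ℤ) - ((k + 1 : ℕ) - 1)) := by
        rw [Finset.sum_map]
    _ < ∑ j, (1 - B)⁻¹ ⟨k + 1 - 1, by omega⟩ j * w ((j : ℤ) - ((k + 1 : ℕ) - 1)) :=
        Finset.sum_lt_sum_of_subset (Finset.subset_univ _) (Finset.mem_univ j₀) hj₀ hpos
          fun j _ _ => mul_nonneg (Matrix.inv_one_sub_apply_nonneg hB0 hB _ _) (hw0 _)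

end Toeplitz

theorem Mkβ_eq_Lkβ_one (p : ℕ → ℝ) (β : ℝ) (k : ℕ) (hk : 1 ≤ k) :
    Mkβ p β k hk = Lkβ p 1 β k hk := by
  simp [Mkβ, Lkβ]

/-- `L^(k)_β < L^(k+1)_β` and `M^(k)_β < M^(k+1)_β`. -/
theorem L_M_strict_mono
    (p : ℕ → ℝ) (d : ℤ → ℝ) (β : ℝ) (k : ℕ)
    (hk : 1 ≤ k)
    (hp0 : ∀ n, 0 ≤ p n)
    (hp1 : 0 < p 1)
    (hrow : ∀ i : ℤ, HasSum (fun j : ℤ => p (i - j).natAbs) 1)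
    (hβ : β ∈ Set.Ioo (0 : ℝ) 1)
    (hd0 : ∀ e, 0 ≤ d e)
    (hdpos : ∀ e : ℤ, e ≠ 0 → 0 < d e) :
    Lkβ p d β k hk < Lkβ p d β (k + 1) (by omega) ∧
    Mkβ p β k hk < Mkβ p β (k + 1) (by omega) := by
  refine ⟨Lkβ_lt_Lkβ_succ hk hp0 hp1 hrow hβ hd0 (hdpos k (by omega)), ?_⟩
  rw [Mkβ_eq_Lkβ_one, Mkβ_eq_Lkβ_one]
  exact Lkβ_lt_Lkβ_succ hk hp0 hp1 hrow hβ (fun _ => zero_le_one) one_pos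
end

section
/- Let K ≤ -2 and let T be the (2k-1)×(2k-1) symmetric tridiagonal Toeplitz matrix with diagonal K and off-diagonal 1, indexed by S^(k) = {-(k-1),...,k-1}. With m = arccosh(-K/2), the entries of -T^{-1} are given by [(-T)^{-1}](i,j) = (cosh((2k - |i-j|)m) - cosh((i+j)m)) / (2 sinh(m) sinh(2km)) for K < -2; for K = -2 the entries of (-T)^{-1} are (k - max(i,j))(k + min(i,j)) / (2k). -/
open Real

/-- Inverse hyperbolic cosine (for `x ≥ 1`): `arccosh x = log (x + √(x² - 1))`. -/
noncomputable def arccosh (x : ℝ) : ℝ := Real.log (x + Real.sqrt (x ^ 2 - 1))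

/-- The `(2k-1)×(2k-1)` symmetric tridiagonal Toeplitz matrix with diagonal `K`
and off-diagonal `1`, indexed by `Fin (2k-1)` (index `i` corresponds to the
integer `i - (k-1)` in `S^(k) = {-(k-1),…,k-1}`). -/
def tridiag (k : ℕ) (K : ℝ) : Matrix (Fin (2 * k - 1)) (Fin (2 * k - 1)) ℝ :=
  fun i j =>
    if i = j then K else if ((i.val : ℤ) - (j.val : ℤ)).natAbs = 1 then 1 else 0

/-- The integer corresponding to a `Fin (2k-1)` index. -/
def idxZ (k : ℕ) (i : Fin (2 * k - 1)) : ℤ := (i.val : ℤ) - ((k : ℤ) - 1)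

/-! With `c = -K`, the matrix `-T` is the discrete operator `u ↦ c u(x) - u(x - 1) - u(x + 1)` on
`{-(k-1), …, k-1}` with Dirichlet conditions `u(±k) = 0`. If `φ` solves the homogeneous recurrence
`φ(n - 1) + φ(n + 1) = c φ(n)` with `φ(0) = 0`, the Green's function of this problem is
`φ(k + min x y) φ(k - max x y) / (φ(1) φ(2k))`: away from the diagonal it is a multiple of a
solution in `x`, and on the diagonal the defect is the Casoratian of `φ` and `n ↦ φ(2k - n)`, which
is constant and equal to `φ(1) φ(2k)`. For `c = 2 cosh m` take `φ(n) = sinh(n m)` (the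
product-to-sum formula then gives the cosh expression), and for `c = 2` take `φ(n) = n`.
-/

section Casoratian

variable {R : Type*} [CommRing R] {c : R} {φ ψ : ℤ → R}

theorem casoratian_succ (hφ : ∀ n, φ (n - 1) + φ (n + 1) = c * φ n)
    (hψ : ∀ n, ψ (n - 1) + ψ (n + 1) = c * ψ n) (n : ℤ) :
    φ (n + 1 + 1) * ψ (n + 1) - φ (n + 1) * ψ (n + 1 + 1) =
      φ (n + 1) * ψ n - φ n * ψ (n + 1) := by
  have hφ' := hφ (n + 1)
  have hψ' := hψ (n + 1)
  rw [add_sub_cancel_right] at hφ' hψ'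
  linear_combination ψ (n + 1) * hφ' - φ (n + 1) * hψ'

theorem casoratian_eq (hφ : ∀ n, φ (n - 1) + φ (n + 1) = c * φ n)
    (hψ : ∀ n, ψ (n - 1) + ψ (n + 1) = c * ψ n) (n : ℤ) :
    φ (n + 1) * ψ n - φ n * ψ (n + 1) = φ 1 * ψ 0 - φ 0 * ψ 1 := by
  induction n using Int.induction_on with
  | zero => simp
  | succ n ih => rw [casoratian_succ hφ hψ, ih]
  | pred n ih => rw [← ih, ← casoratian_succ hφ hψ, sub_add_cancel]

end Casoratian

noncomputable def dirichletGreen (φ : ℤ → ℝ) (k : ℕ) (x y : ℤ) : ℝ :=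
  φ (k + min x y) * φ (k - max x y) / (φ 1 * φ (2 * k))

section DirichletGreen

variable {φ : ℤ → ℝ} {k : ℕ} {y : ℤ}

theorem dirichletGreen_neg_left (hφ0 : φ 0 = 0) (hy : -(k : ℤ) ≤ y) :
    dirichletGreen φ k (-k) y = 0 := by
  rw [dirichletGreen, min_eq_left hy, add_neg_cancel, hφ0, zero_mul, zero_div]

theorem dirichletGreen_right (hφ0 : φ 0 = 0) (hy : y ≤ k) :
    dirichletGreen φ k k y = 0 := by
  rw [dirichletGreen, max_eq_left hy, sub_self, hφ0, mul_zero, zero_div]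

theorem dirichletGreen_recurrence {c : ℝ} (hφ : ∀ n, φ (n - 1) + φ (n + 1) = c * φ n)
    (hφ0 : φ 0 = 0) (hW : φ 1 * φ (2 * k) ≠ 0) (x y : ℤ) :
    c * dirichletGreen φ k x y - dirichletGreen φ k (x - 1) y - dirichletGreen φ k (x + 1) y =
      if x = y then 1 else 0 := by
  obtain ⟨h1, h2k⟩ := mul_ne_zero_iff.mp hW
  simp only [dirichletGreen]
  rcases lt_trichotomy x y with hxy | rfl | hxy
  · rw [if_neg hxy.ne, min_eq_left hxy.le, min_eq_left (by omega : x - 1 ≤ y),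
      min_eq_left (by omega : x + 1 ≤ y), max_eq_right hxy.le,
      max_eq_right (by omega : x - 1 ≤ y), max_eq_right (by omega : x + 1 ≤ y)]
    have h := hφ (k + x)
    rw [add_sub_assoc, add_assoc] at h
    field_simp
    linear_combination -(φ (k - y)) * h
  · have hC := casoratian_eq (ψ := fun n => φ (2 * k - n)) hφ
      (fun n => by rw [← hφ (2 * k - n)]; ring_nf) (k + x)
    simp only [hφ0, zero_mul, sub_zero] at hC
    rw [show (k : ℤ) + x + 1 = k + (x + 1) by ring, show 2 * (k : ℤ) - (k + x) = k - x by ring,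
      show 2 * (k : ℤ) - (k + (x + 1)) = k - (x + 1) by ring] at hC
    have h := hφ (k + x)
    rw [add_sub_assoc, add_assoc] at h
    rw [if_pos rfl, min_self, max_self, min_eq_left (by omega : x - 1 ≤ x),
      max_eq_right (by omega : x - 1 ≤ x), min_eq_right (by omega : x ≤ x + 1),
      max_eq_left (by omega : x ≤ x + 1)]
    field_simp
    linear_combination hC - φ (k - x) * h
  · rw [if_neg hxy.ne', min_eq_right hxy.le, min_eq_right (by omega : y ≤ x - 1),
      min_eq_right (by omega : y ≤ x + 1), max_eq_left hxy.le,
      max_eq_left (by omega : y ≤ x - 1), max_eq_left (by omega : y ≤ x + 1)]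
    have h := hφ (k - x)
    rw [sub_sub, sub_add] at h
    field_simp
    linear_combination -(φ (k + y)) * h

end DirichletGreen

theorem dirichletGreen_sinh (m : ℝ) (k : ℕ) (x y : ℤ) :
    dirichletGreen (fun n => sinh (n * m)) k x y =
      (cosh ((2 * (k : ℝ) - |(x : ℝ) - y|) * m) - cosh (((x : ℝ) + y) * m)) /
        (2 * sinh m * sinh (2 * (k : ℝ) * m)) := by
  have hcosh (a b : ℝ) : cosh (a + b) - cosh (a - b) = 2 * sinh a * sinh b := by
    rw [cosh_add, cosh_sub]; ring
  have habs : |(x : ℝ) - y| = max (x : ℝ) y - min (x : ℝ) y := (max_sub_min_eq_abs' _ _).symm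
  have hsum : (x : ℝ) + y = min (x : ℝ) y + max (x : ℝ) y := (min_add_max _ _).symm
  rw [dirichletGreen, habs, hsum]
  push_cast
  rw [show (2 * (k : ℝ) - (max (x : ℝ) y - min (x : ℝ) y)) * m =
      (k + min (x : ℝ) y) * m + (k - max (x : ℝ) y) * m by ring,
    show (min (x : ℝ) y + max (x : ℝ) y) * m = (k + min (x : ℝ) y) * m - (k - max (x : ℝ) y) * m
      by ring, hcosh, one_mul]
  ring

theorem dirichletGreen_intCast (k : ℕ) (x y : ℤ) :
    dirichletGreen (fun n => (n : ℝ)) k x y =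
      ((k : ℝ) - (max x y : ℤ)) * ((k : ℝ) + (min x y : ℤ)) / (2 * (k : ℝ)) := by
  rw [dirichletGreen]
  push_cast
  ring

theorem sinh_intCast_mul_recurrence (m : ℝ) (n : ℤ) :
    sinh (((n - 1 : ℤ) : ℝ) * m) + sinh (((n + 1 : ℤ) : ℝ) * m) = 2 * cosh m * sinh (n * m) := by
  push_cast
  rw [sub_mul, add_mul, one_mul, sinh_sub, sinh_add]
  ring

section Tridiag

variable {k : ℕ} {K : ℝ}

theorem idxZ_injective : Function.Injective (idxZ k) := fun a b h => by
  simp only [idxZ] at h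
  exact Fin.ext (by omega)

theorem idxZ_mem_Ioo (i : Fin (2 * k - 1)) : idxZ k i ∈ Finset.Ioo (-(k : ℤ)) k := by
  have := i.isLt
  simp only [Finset.mem_Ioo, idxZ]
  omega

theorem sum_comp_idxZ {M : Type*} [AddCommMonoid M] (F : ℤ → M) :
    ∑ l : Fin (2 * k - 1), F (idxZ k l) = ∑ z ∈ Finset.Ioo (-(k : ℤ)) k, F z := by
  refine Finset.sum_bij (fun l _ => idxZ k l) (fun l _ => idxZ_mem_Ioo l)
    (fun a _ b _ h => idxZ_injective h) (fun z hz => ?_) (fun _ _ => rfl)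
  rw [Finset.mem_Ioo] at hz
  exact ⟨⟨(z + k - 1).toNat, by omega⟩, Finset.mem_univ _, by simp only [idxZ]; omega⟩

theorem neg_tridiag_apply (i l : Fin (2 * k - 1)) :
    (-(tridiag k K)) i l = (if idxZ k l = idxZ k i then -K else 0) -
      (if idxZ k l = idxZ k i - 1 then 1 else 0) - (if idxZ k l = idxZ k i + 1 then 1 else 0) := by
  simp only [Matrix.neg_apply, tridiag, Fin.ext_iff]
  split_ifs <;> simp only [idxZ] at * <;> first | ring1 | omega

theorem sum_neg_tridiag_mul {f : ℤ → ℝ} (hf_neg : f (-k) = 0) (hf : f k = 0)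
    (i : Fin (2 * k - 1)) :
    ∑ l, (-(tridiag k K)) i l * f (idxZ k l) =
      -K * f (idxZ k i) - f (idxZ k i - 1) - f (idxZ k i + 1) := by
  set x := idxZ k i
  have hx := Finset.mem_Ioo.mp (idxZ_mem_Ioo i)
  simp_rw [neg_tridiag_apply]
  rw [sum_comp_idxZ (fun z => ((if z = x then -K else 0) - (if z = x - 1 then 1 else 0) -
      (if z = x + 1 then 1 else 0)) * f z)]
  -- the boundary values `f (-k) = f k = 0` let us sum over `[-k, k]`, which contains `x ± 1`
  rw [Finset.sum_subset Finset.Ioo_subset_Icc_self fun z hz hz' => ?_]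
  · simp only [sub_mul, ite_mul, zero_mul, one_mul, Finset.sum_sub_distrib, Finset.sum_ite_eq',
      Finset.mem_Icc]
    rw [if_pos (by omega), if_pos (by omega), if_pos (by omega)]
  · obtain rfl | rfl : z = -k ∨ z = k := by
      simp only [Finset.mem_Icc, Finset.mem_Ioo] at hz hz'
      omega
    · rw [hf_neg, mul_zero]
    · rw [hf, mul_zero]

theorem inv_neg_tridiag_apply_of_green {G : ℤ → ℤ → ℝ}
    (hG_neg : ∀ y, -(k : ℤ) ≤ y → G (-k) y = 0) (hG : ∀ y : ℤ, y ≤ k → G k y = 0)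
    (hrec : ∀ x y, -K * G x y - G (x - 1) y - G (x + 1) y = if x = y then 1 else 0)
    (i j : Fin (2 * k - 1)) :
    (-(tridiag k K))⁻¹ i j = G (idxZ k i) (idxZ k j) := by
  have hmul : -(tridiag k K) * Matrix.of (fun i j => G (idxZ k i) (idxZ k j)) = 1 := by
    ext a b
    have hb := Finset.mem_Ioo.mp (idxZ_mem_Ioo b)
    simp only [Matrix.mul_apply, Matrix.of_apply]
    rw [sum_neg_tridiag_mul (f := fun x => G x (idxZ k b)) (hG_neg _ hb.1.le) (hG _ hb.2.le),
      hrec, Matrix.one_apply]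
    exact if_congr idxZ_injective.eq_iff rfl rfl
  rw [Matrix.inv_eq_right_inv hmul, Matrix.of_apply]

end Tridiag

theorem tridiag_inverse_general (k : ℕ) (K : ℝ) (hk : 1 ≤ k) :
    (K < -2 →
      ∀ i j : Fin (2 * k - 1),
        (-(tridiag k K))⁻¹ i j =
          (Real.cosh ((2 * (k : ℝ) - |(idxZ k i : ℝ) - (idxZ k j : ℝ)|) *
              arccosh (-K / 2)) -
            Real.cosh (((idxZ k i : ℝ) + (idxZ k j : ℝ)) * arccosh (-K / 2))) /
          (2 * Real.sinh (arccosh (-K / 2)) *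
            Real.sinh (2 * (k : ℝ) * arccosh (-K / 2)))) ∧
    (K = -2 →
      ∀ i j : Fin (2 * k - 1),
        (-(tridiag k K))⁻¹ i j =
          (((k : ℝ) - (max (idxZ k i) (idxZ k j) : ℤ)) *
            ((k : ℝ) + (min (idxZ k i) (idxZ k j) : ℤ))) / (2 * (k : ℝ))) := by
  have hk' : (0 : ℝ) < k := by exact_mod_cast hk
  constructor
  · intro hK i j
    set m := arccosh (-K / 2)
    have hm : 0 < m := Real.arcosh_pos (by linarith)
    have hcosh : 2 * cosh m = -K := by
      rw [show m = Real.arcosh (-K / 2) from rfl, Real.cosh_arcosh (by linarith)]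
      ring
    have hW : sinh ((1 : ℤ) * m) * sinh (((2 * k : ℤ) : ℝ) * m) ≠ 0 := by
      have : 0 < ((2 * k : ℤ) : ℝ) * m := by push_cast; positivity
      simp only [Int.cast_one, one_mul]
      exact mul_ne_zero (Real.sinh_pos_iff.mpr hm).ne' (Real.sinh_pos_iff.mpr this).ne'
    have hφ (n : ℤ) := hcosh ▸ sinh_intCast_mul_recurrence m n
    rw [inv_neg_tridiag_apply_of_green (G := dirichletGreen (fun n => sinh (n * m)) k)
      (fun _ => dirichletGreen_neg_left (by simp))
      (fun _ => dirichletGreen_right (by simp))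
      (dirichletGreen_recurrence hφ (by simp) hW), dirichletGreen_sinh]
  · rintro rfl i j
    have hW : ((1 : ℤ) : ℝ) * ((2 * k : ℤ) : ℝ) ≠ 0 := by push_cast; positivity
    rw [inv_neg_tridiag_apply_of_green (G := dirichletGreen (fun n => (n : ℝ)) k)
      (fun _ => dirichletGreen_neg_left Int.cast_zero)
      (fun _ => dirichletGreen_right Int.cast_zero)
      (dirichletGreen_recurrence (c := -(-2)) (fun n => by push_cast; ring) Int.cast_zero hW),
      dirichletGreen_intCast]

/-- closed-form inverse of a symmetric tridiagonal Toeplitz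
matrix.  For `K < -2`, with `m = arccosh(-K/2)`,
`[(-T)⁻¹](i,j) = (cosh((2k-|i-j|)m) - cosh((i+j)m)) / (2 sinh m · sinh(2km))`;
for `K = -2`, `[(-T)⁻¹](i,j) = (k - max(i,j))(k + min(i,j)) / (2k)`. -/
theorem tridiag_inverse (k : ℕ) (K : ℝ) (hk : 1 ≤ k) (hK : K ≤ -2) :
    (K < -2 →
      ∀ i j : Fin (2 * k - 1),
        (-(tridiag k K))⁻¹ i j =
          (Real.cosh ((2 * (k : ℝ) - |(idxZ k i : ℝ) - (idxZ k j : ℝ)|) *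
              arccosh (-K / 2)) -
            Real.cosh (((idxZ k i : ℝ) + (idxZ k j : ℝ)) * arccosh (-K / 2))) /
          (2 * Real.sinh (arccosh (-K / 2)) *
            Real.sinh (2 * (k : ℝ) * arccosh (-K / 2)))) ∧
    (K = -2 →
      ∀ i j : Fin (2 * k - 1),
        (-(tridiag k K))⁻¹ i j =
          (((k : ℝ) - (max (idxZ k i) (idxZ k j) : ℤ)) *
            ((k : ℝ) + (min (idxZ k i) (idxZ k j) : ℤ))) / (2 * (k : ℝ))) :=
  tridiag_inverse_general k K hk
end
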